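/- (Inverse trace inequality for polynomials on simplices.) For every dimension d ≥ 1 and polynomial degree ℓ ≥ 0 there is a constant m̃₀ depending only on ℓ and d such that for every nondegenerate d-simplex K ⊂ ℝ^d, every (d−1)-face F of K, and every polynomial p of total degree ≤ ℓ: (|K|/|F|)^{1/2} ‖p‖_{L²(F)} ≤ m̃₀ ‖p‖_{L²(K)}, where |K| is the d-dimensional Lebesgue measure of K and |F| is the (d−1)-dimensional Hausdorff measure of F. One may take m̃₀ = (|K̂|^{1/2}/|F̂|^{1/2}) ∑_{ẑ ∈ F̂} ‖ψ̂_ẑ‖_{L²(K̂)} ‖φ̂_ẑ‖_{L²(F̂)}, the sum ranging over the Lagrange nodes of degree ℓ on the corresponding face F̂ of the reference simplex K̂. -/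

import Mathlib

open MeasureTheory Metric Set
open scoped ENNReal NNReal BigOperators RealInnerProductSpace Classical

noncomputable section

/-- Euclidean space `ℝ^d`. -/
abbrev Euc (d : ℕ) : Type := EuclideanSpace ℝ (Fin d)

/-- A nondegenerate closed `d`-simplex in `ℝ^d`, given by its vertices. -/
structure Simp (d : ℕ) where
  vert : Fin (d + 1) → Euc d
  indep : AffineIndependent ℝ vert

namespace Simp

variable {d : ℕ}

/-- The simplex as a subset of `ℝ^d`. -/
def toSet (K : Simp d) : Set (Euc d) := convexHull ℝ (Set.range K.vert)

/-- The closed `(d-1)`-dimensional face opposite to the vertex `i`. -/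
def face (K : Simp d) (i : Fin (d + 1)) : Set (Euc d) := convexHull ℝ (K.vert '' {i}ᶜ)

/-- Diameter of a simplex. -/
def diam (K : Simp d) : ℝ := Metric.diam K.toSet

/-- Maximal diameter of a ball inscribed in the simplex. -/
def inradiusDiam (K : Simp d) : ℝ :=
  2 * sSup {r : ℝ | ∃ c : Euc d, Metric.ball c r ⊆ K.toSet}

/-- `d`-dimensional volume of the simplex. -/
def vol (K : Simp d) : ℝ := (volume K.toSet).toReal

/-- The Lagrange nodes of degree `ℓ` of the simplex: points whose barycentric
coordinates are multiples of `1/ℓ`. -/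
def nodes (K : Simp d) (ℓ : ℕ) : Set (Euc d) :=
  {x | ∃ a : Fin (d + 1) → ℕ, (∑ i, a i) = ℓ ∧
    x = ∑ i, (((a i : ℝ) / (ℓ : ℝ))) • K.vert i}

end Simp

/-- Squared `L²`-norm of a function on `ω`. -/
def sqL2 {d : ℕ} (ω : Set (Euc d)) (f : Euc d → ℝ) : ℝ := ∫ x in ω, (f x) ^ 2

/-- `L²`-norm of a function on `ω`. -/
def l2 {d : ℕ} (ω : Set (Euc d)) (f : Euc d → ℝ) : ℝ := Real.sqrt (sqL2 ω f)

/-- Squared `L²`-norm of a vector field on `ω`. -/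
def sqL2v {d : ℕ} (ω : Set (Euc d)) (g : Euc d → Euc d) : ℝ := ∫ x in ω, ‖g x‖ ^ 2

/-- Squared `L²`-norm of a function on a lower dimensional set `F`, with respect to
the `(d-1)`-dimensional Hausdorff measure. -/
def sqL2S {d : ℕ} (F : Set (Euc d)) (f : Euc d → ℝ) : ℝ :=
  ∫ x in F, (f x) ^ 2 ∂(μH[(d : ℝ) - 1])

/-- `u ∈ H¹(ω)` with weak gradient `g`: both are square integrable on `ω` and `g`
is the distributional gradient of `u` on the interior of `ω`. -/
def HasWeakGradOn {d : ℕ} (ω : Set (Euc d)) (u : Euc d → ℝ) (g : Euc d → Euc d) : Prop :=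
  MemLp u 2 (volume.restrict ω) ∧ MemLp g 2 (volume.restrict ω) ∧
  ∀ φ : Euc d → ℝ, ContDiff ℝ (⊤ : ℕ∞) φ → HasCompactSupport φ → tsupport φ ⊆ interior ω →
    ∀ i : Fin d,
      ∫ x in ω, u x * fderiv ℝ φ x (EuclideanSpace.single i 1)
        = - ∫ x in ω, (g x i) * φ x

/-- `v` coincides on `s` with a polynomial of total degree at most `ℓ`. -/
def IsPolyOn {d : ℕ} (ℓ : ℕ) (s : Set (Euc d)) (v : Euc d → ℝ) : Prop :=
  ∃ p : MvPolynomial (Fin d) ℝ, p.totalDegree ≤ ℓ ∧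
    ∀ x ∈ s, v x = MvPolynomial.eval (fun i => x i) p

/-- Squared reaction-diffusion error `|||u - v|||²_ω = ‖u-v‖²_{L²(ω)} + ε‖∇(u-v)‖²_{L²(ω)}`
between `u` (with weak gradient `g`) and a piecewise smooth `v` (whose gradient is taken
pointwise, i.e. elementwise for piecewise polynomials). -/
def rdErr2 {d : ℕ} (ε : ℝ) (ω : Set (Euc d)) (u : Euc d → ℝ) (g : Euc d → Euc d)
    (v : Euc d → ℝ) : ℝ :=
  ∫ x in ω, ((u x - v x) ^ 2 + ε * ‖g x - gradient v x‖ ^ 2)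

/-- Reaction-diffusion error `|||u - v|||_ω`. -/
def rdE {d : ℕ} (ε : ℝ) (ω : Set (Euc d)) (u : Euc d → ℝ) (g : Euc d → Euc d)
    (v : Euc d → ℝ) : ℝ :=
  Real.sqrt (rdErr2 ε ω u g v)

/-- A conforming simplicial mesh of the (polyhedral) domain `Ω`. -/
structure Mesh (d : ℕ) (Ω : Set (Euc d)) where
  elems : Finset (Simp d)
  covers : (⋃ K ∈ elems, K.toSet) = closure Ω
  disjointInteriors : ∀ K ∈ elems, ∀ K' ∈ elems, K ≠ K' →
    interior K.toSet ∩ interior K'.toSet = ∅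
  conforming : ∀ K ∈ elems, ∀ K' ∈ elems, K ≠ K' →
    K.toSet ∩ K'.toSet = ∅ ∨
    ∃ s : Set (Fin (d + 1)), s ≠ Set.univ ∧
      K.toSet ∩ K'.toSet = convexHull ℝ (K.vert '' s) ∧
      ∃ s' : Set (Fin (d + 1)), K.vert '' s = K'.vert '' s'

namespace Mesh

variable {d : ℕ} {Ω : Set (Euc d)}

/-- All `(d-1)`-dimensional faces of elements of the mesh. -/
def allFaces (T : Mesh d Ω) : Set (Set (Euc d)) :=
  {F | ∃ K ∈ T.elems, ∃ i, F = K.face i}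

/-- Interelement faces: faces not contained in the boundary of `Ω`. -/
def interFaces (T : Mesh d Ω) : Set (Set (Euc d)) :=
  {F | F ∈ T.allFaces ∧ ¬ F ⊆ frontier Ω}

/-- `ω_T(F)`: union of the elements of `T` having `F` as a face. -/
def pair (T : Mesh d Ω) (F : Set (Euc d)) : Set (Euc d) :=
  ⋃ K ∈ {K | K ∈ T.elems ∧ ∃ i, F = K.face i}, K.toSet

/-- All Lagrange nodes of degree `ℓ` of the mesh. -/
def nodeSet (T : Mesh d Ω) (ℓ : ℕ) : Set (Euc d) := ⋃ K ∈ T.elems, K.nodes ℓ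

/-- `n̄(T)`: maximal number of elements sharing one node. -/
def nbar (T : Mesh d Ω) (ℓ : ℕ) : ℕ :=
  sSup {n | ∃ z ∈ T.nodeSet ℓ, n = {K | K ∈ T.elems ∧ z ∈ K.toSet}.ncard}

/-- `μ_T`: maximal square root of the volume ratio of touching elements. -/
def mu (T : Mesh d Ω) : ℝ :=
  sSup {r | ∃ K ∈ T.elems, ∃ K' ∈ T.elems,
    (K.toSet ∩ K'.toSet).Nonempty ∧ r = Real.sqrt (K.vol / K'.vol)}

/-- `σ_T`: shape parameter, maximal ratio `h_K̃ / ρ_K` over touching elements. -/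
def sigma (T : Mesh d Ω) : ℝ :=
  sSup {r | ∃ K ∈ T.elems, ∃ K' ∈ T.elems,
    (K.toSet ∩ K'.toSet).Nonempty ∧ r = K'.diam / K.inradiusDiam}

/-- `K` and `K'` intersect in a common `(d-1)`-face containing the point `z`. -/
def sharedFaceAt (_T : Mesh d Ω) (K K' : Simp d) (z : Euc d) : Prop :=
  ∃ i i', K.face i = K'.face i' ∧ K.toSet ∩ K'.toSet = K.face i ∧ z ∈ K.face i

/-- Face-connectedness of the mesh with respect to the degree-`ℓ` Lagrange nodes. -/
def FaceConnected (T : Mesh d Ω) (ℓ : ℕ) : Prop :=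
  ∀ K ∈ T.elems, ∀ K' ∈ T.elems, ∀ z : Euc d, z ∈ K.nodes ℓ → z ∈ K'.nodes ℓ →
    ∃ n : ℕ, ∃ c : Fin (n + 1) → Simp d, Function.Injective c ∧
      (∀ j, c j ∈ T.elems) ∧ c 0 = K ∧ c (Fin.last n) = K' ∧
      ∀ j : Fin n, T.sharedFaceAt (c j.castSucc) (c j.succ) z

/-- Membership in the finite element space `S^{ℓ,0}(T)`: continuous and a polynomial of
degree `≤ ℓ` on each element. -/
def MemFE (T : Mesh d Ω) (ℓ : ℕ) (v : Euc d → ℝ) : Prop :=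
  ContinuousOn v (closure Ω) ∧ ∀ K ∈ T.elems, IsPolyOn ℓ K.toSet v

end Mesh

namespace InvTraceAux

open MvPolynomial

variable {d : ℕ}

lemma continuous_coord (j : Fin d) : Continuous fun x : Euc d => x j :=
  (continuous_apply j).comp (PiLp.continuous_ofLp (p := 2) (β := fun _ : Fin d => ℝ))

lemma continuous_evalp (p : MvPolynomial (Fin d) ℝ) :
    Continuous fun x : Euc d => eval (fun j => x j) p := by
  induction p using MvPolynomial.induction_on with
  | C c => simpa using continuous_const
  | add p q hp hq => simp only [map_add]; exact hp.add hq
  | mul_X p n hp => simp only [map_mul, MvPolynomial.eval_X]; exact hp.mul (continuous_coord n)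

/-- vertices of the reference corner simplex -/
def corner (d : ℕ) : Fin (d + 1) → Euc d :=
  fun j => if h : j = 0 then 0 else EuclideanSpace.single (j.pred h) 1

/-- the reference corner simplex -/
def refS (d : ℕ) : Set (Euc d) := convexHull ℝ (Set.range (corner d))

lemma isCompact_refS : IsCompact (refS d) :=
  (Set.finite_range (corner d)).isCompact_convexHull ℝ

lemma convex_refS : Convex ℝ (refS d) := convex_convexHull _ _

lemma measurableSet_refS : MeasurableSet (refS d) :=
  isCompact_refS.isClosed.measurableSet

lemma sum_smul_single (x : Euc d) :
    ∑ j : Fin d, x j • EuclideanSpace.single j (1:ℝ) = x := by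
  have h := (EuclideanSpace.basisFun (Fin d) ℝ).sum_repr x
  simpa [EuclideanSpace.basisFun_apply, EuclideanSpace.basisFun_repr] using h

lemma mem_refS_of (x : Euc d) (hpos : ∀ i, 0 ≤ x i) (hsum : ∑ i, x i ≤ 1) :
    x ∈ refS d := by
  classical
  set w : Fin (d + 1) → ℝ := fun j => if h : j = 0 then 1 - ∑ i, x i else x (j.pred h) with hw
  have hsumw : ∑ j, w j = 1 := by
    rw [Fin.sum_univ_succ]
    have h0 : w 0 = 1 - ∑ i, x i := by simp [hw]
    have hs : ∀ j : Fin d, w j.succ = x j := by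
      intro j
      simp only [hw, Fin.succ_ne_zero, not_false_iff, dif_neg]
      rw [Fin.pred_succ]
    simp only [h0, hs]
    ring
  have hwnn : ∀ j ∈ Finset.univ, 0 ≤ w j := by
    intro j _
    by_cases h : j = 0
    · simp [hw, h, sub_nonneg, hsum]
    · simp [hw, h, hpos]
  have hmem : ∀ j ∈ (Finset.univ : Finset (Fin (d+1))), corner d j ∈ Set.range (corner d) :=
    fun j _ => ⟨j, rfl⟩
  have hcm := Finset.centerMass_mem_convexHull Finset.univ hwnn (by rw [hsumw]; norm_num) hmem
  have hcmx : Finset.univ.centerMass w (corner d) = x := by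
    rw [Finset.centerMass, hsumw]
    rw [inv_one, one_smul, Fin.sum_univ_succ]
    have h0 : w 0 • corner d 0 = 0 := by simp [corner]
    have hs : ∀ j : Fin d, w j.succ • corner d j.succ = x j • EuclideanSpace.single j (1:ℝ) := by
      intro j
      simp only [hw, corner, Fin.succ_ne_zero, not_false_iff, dif_neg]
      rw [Fin.pred_succ]
    simp only [h0, hs, zero_add, sum_smul_single]
  rwa [hcmx] at hcm

lemma exists_interior_refS (d : ℕ) : ∃ z : Euc d, z ∈ interior (refS d) := by
  classical
  set U : Set (Euc d) := {x | (∀ i, 0 < x i) ∧ ∑ i, x i < 1} with hU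
  have hUopen : IsOpen U := by
    have h1 : IsOpen {x : Euc d | ∀ i, 0 < x i} := by
      rw [Set.setOf_forall]
      exact isOpen_iInter_of_finite fun i => isOpen_lt continuous_const (continuous_coord i)
    have h2 : IsOpen {x : Euc d | ∑ i, x i < 1} :=
      isOpen_lt (continuous_finset_sum _ fun i _ => continuous_coord i) continuous_const
    exact h1.inter h2
  have hUsub : U ⊆ refS d := fun x hx => mem_refS_of x (fun i => (hx.1 i).le) hx.2.le
  have hzU : (WithLp.toLp 2 (fun _ => 1 / (2 * (d:ℝ) + 2)) : Euc d) ∈ U := by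
    show (∀ i : Fin d, 0 < 1 / (2 * (d:ℝ) + 2)) ∧ ∑ _i : Fin d, (1 / (2 * (d:ℝ) + 2)) < 1
    constructor
    · intro i; positivity
    · have : ∑ _i : Fin d, (1 / (2 * (d:ℝ) + 2)) = d * (1 / (2 * (d:ℝ) + 2)) := by
        simp [Finset.sum_const, Finset.card_univ, mul_comm]
      rw [this]
      rw [div_eq_inv_mul, mul_one, ← div_eq_mul_inv, div_lt_one (by positivity)]
      linarith
  exact ⟨_, interior_maximal hUsub hUopen hzU⟩

end InvTraceAux

namespace InvTraceAux

open MvPolynomial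

variable {d : ℕ}

set_option maxHeartbeats 1600000 in
lemma ref_bound (d ℓ : ℕ) :
    ∃ C : ℝ, 0 ≤ C ∧ ∀ p : MvPolynomial (Fin d) ℝ, p.totalDegree ≤ ℓ →
      ∀ y, y ∈ refS d → (eval (fun j => y j) p) ^ 2
        ≤ C * ∫ x in refS d, (eval (fun j => x j) p) ^ 2 := by
  classical
  have hco : IsCompact (refS d) := isCompact_refS
  haveI : CompactSpace (↥(refS d)) := isCompact_iff_compactSpace.mp hco
  have hSm : MeasurableSet (refS d) := measurableSet_refS
  set μ : Measure (↥(refS d)) := MeasureTheory.Measure.comap Subtype.val volume with hμdef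
  have hμapp : ∀ t : Set (↥(refS d)), μ t = volume (Subtype.val '' t) := by
    intro t
    rw [hμdef, comap_subtype_coe_apply hSm]
  haveI : IsFiniteMeasure μ := by
    constructor
    rw [hμapp, Set.image_univ, Subtype.range_coe]
    exact hco.measure_lt_top
  have hIntf : ∀ f : C(↥(refS d), ℝ), MeasureTheory.Integrable (⇑f) μ := by
    intro f
    have hcs : HasCompactSupport (⇑f) :=
      IsCompact.of_isClosed_subset isCompact_univ (isClosed_tsupport _) (Set.subset_univ _)
    exact f.continuous.integrable_of_hasCompactSupport hcs
  set J : C(↥(refS d), ℝ) → ℝ := fun f => ∫ y, (f y) ^ 2 ∂μ with hJdef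
  have hJcont : Continuous J := by
    have h1 : Continuous fun g : C(↥(refS d), ℝ) => ∫ y, g y ∂μ := by
      have hlip : LipschitzWith (μ Set.univ).toNNReal
          (fun g : C(↥(refS d), ℝ) => ∫ y, g y ∂μ) := by
        refine LipschitzWith.of_dist_le_mul ?_
        intro f g
        rw [dist_eq_norm, dist_eq_norm, ← MeasureTheory.integral_sub (hIntf f) (hIntf g)]
        have hb : ∀ᵐ y ∂μ, ‖f y - g y‖ ≤ ‖f - g‖ := by
          filter_upwards with y
          simpa using (f - g).norm_coe_le_norm y
        have hle : ‖∫ y, (f y - g y) ∂μ‖ ≤ ‖f - g‖ * (μ Set.univ).toReal :=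
          MeasureTheory.norm_integral_le_of_norm_le_const hb
        calc ‖∫ y, (f y - g y) ∂μ‖ ≤ ‖f - g‖ * (μ Set.univ).toReal := hle
          _ = ((μ Set.univ).toNNReal : ℝ) * ‖f - g‖ := by rw [mul_comm]; rfl
      exact hlip.continuous
    have h2 : Continuous fun f : C(↥(refS d), ℝ) => f * f :=
      continuous_id.mul continuous_id
    have hJeq : J = (fun g : C(↥(refS d), ℝ) => ∫ y, g y ∂μ) ∘ (fun f => f * f) := by
      funext f
      simp [hJdef, pow_two]
    rw [hJeq]
    exact h1.comp h2
  have hJnn : ∀ f : C(↥(refS d), ℝ), 0 ≤ J f :=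
    fun f => MeasureTheory.integral_nonneg fun y => sq_nonneg _
  have hJpos : ∀ f : C(↥(refS d), ℝ), f ≠ 0 → 0 < J f := by
    intro f hf
    rcases lt_or_ge 0 (J f) with h | h
    · exact h
    exfalso
    have hJ0 : J f = 0 := le_antisymm h (hJnn f)
    have hInt2 : MeasureTheory.Integrable (fun y => (f y) ^ 2) μ := by
      have := hIntf (f * f)
      simp only [pow_two]; exact this
    have hae : (fun y => (f y) ^ 2) =ᵐ[μ] 0 :=
      (MeasureTheory.integral_eq_zero_iff_of_nonneg (fun y => sq_nonneg (f y)) hInt2).mp hJ0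
    have hnull : μ {y | (f y) ^ 2 ≠ 0} = 0 := by
      simpa [Filter.EventuallyEq, MeasureTheory.ae_iff] using hae
    have hy₀ : ∃ y₀ : ↥(refS d), f y₀ ≠ 0 := by
      by_contra hall
      push_neg at hall
      exact hf (ContinuousMap.ext fun y => by simpa using hall y)
    obtain ⟨y₀, hy₀⟩ := hy₀
    have hopen : IsOpen {y : ↥(refS d) | f y ≠ 0} :=
      (isOpen_compl_singleton (x := (0:ℝ))).preimage f.continuous
    obtain ⟨O, hO, hOeq⟩ := isOpen_induced_iff.mp hopen
    have hy₀O : (y₀ : Euc d) ∈ O := by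
      have h : y₀ ∈ Subtype.val ⁻¹' O := by rw [hOeq]; exact hy₀
      exact h
    obtain ⟨z, hz⟩ := exists_interior_refS d
    have hseg : ∀ t : ℝ, t ∈ Set.Ioc (0:ℝ) 1 →
        (y₀ : Euc d) + t • (z - (y₀ : Euc d)) ∈ interior (refS d) :=
      fun t ht => (convex_refS).add_smul_sub_mem_interior y₀.2 hz ht
    have hcont : Continuous fun t : ℝ => (y₀ : Euc d) + t • (z - (y₀ : Euc d)) :=
      continuous_const.add (continuous_id.smul continuous_const)
    have htend : Filter.Tendsto (fun t : ℝ => (y₀ : Euc d) + t • (z - (y₀ : Euc d)))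
        (nhdsWithin 0 (Set.Ioc (0:ℝ) 1)) (nhds ((y₀ : Euc d))) := by
      have h0 : (y₀ : Euc d) + (0:ℝ) • (z - (y₀ : Euc d)) = (y₀ : Euc d) := by simp
      have h1 := hcont.tendsto 0
      rw [h0] at h1
      exact h1.mono_left nhdsWithin_le_nhds
    have hOev : ∀ᶠ t in nhdsWithin 0 (Set.Ioc (0:ℝ) 1),
        (y₀ : Euc d) + t • (z - (y₀ : Euc d)) ∈ O :=
      htend (hO.mem_nhds hy₀O)
    have hne : (nhdsWithin (0:ℝ) (Set.Ioc (0:ℝ) 1)).NeBot := by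
      apply mem_closure_iff_nhdsWithin_neBot.mp
      rw [closure_Ioc (one_ne_zero).symm]
      exact ⟨le_rfl, zero_le_one⟩
    obtain ⟨t, htO, htmem⟩ := (hOev.and eventually_mem_nhdsWithin).exists
    set x₁ := (y₀ : Euc d) + t • (z - (y₀ : Euc d)) with hx₁
    have hx₁int : x₁ ∈ interior (refS d) := hseg t htmem
    have hopen2 : IsOpen (O ∩ interior (refS d)) := hO.inter isOpen_interior
    obtain ⟨r, hr, hball⟩ := Metric.isOpen_iff.mp hopen2 x₁ ⟨htO, hx₁int⟩
    have hvolpos : 0 < volume (Metric.ball x₁ r) := Metric.measure_ball_pos volume x₁ hr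
    have hsub : (Subtype.val ⁻¹' (Metric.ball x₁ r) : Set (↥(refS d)))
        ⊆ {y : ↥(refS d) | (f y) ^ 2 ≠ 0} := by
      intro y hy
      have h1 : (y : Euc d) ∈ O := (hball hy).1
      have h2 : y ∈ Subtype.val ⁻¹' O := h1
      rw [hOeq] at h2
      exact pow_ne_zero 2 h2
    have hm : volume (Metric.ball x₁ r) ≤ μ {y : ↥(refS d) | (f y) ^ 2 ≠ 0} := by
      have himg : Subtype.val '' (Subtype.val ⁻¹' (Metric.ball x₁ r) : Set (↥(refS d)))
          = Metric.ball x₁ r := by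
        rw [Subtype.image_preimage_coe]
        apply Set.inter_eq_self_of_subset_right
        exact fun w hw => interior_subset (hball hw).2
      calc volume (Metric.ball x₁ r) = μ (Subtype.val ⁻¹' (Metric.ball x₁ r)) := by
            rw [hμapp, himg]
        _ ≤ μ {y : ↥(refS d) | (f y) ^ 2 ≠ 0} := measure_mono hsub
    rw [hnull] at hm
    exact absurd (le_antisymm hm zero_le) (by simpa using hvolpos.ne')
  -- finite-dimensional subspace of C(S, ℝ)
  let Λ : (MvPolynomial.restrictTotalDegree (Fin d) ℝ ℓ) →ₗ[ℝ] C(↥(refS d), ℝ) :=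
    { toFun := fun q => ⟨fun y => eval (fun j => (y : Euc d) j) (q : MvPolynomial (Fin d) ℝ),
        (continuous_evalp _).comp continuous_subtype_val⟩
      map_add' := by
        intro q r
        ext y
        simp [map_add]
      map_smul' := by
        intro c q
        ext y
        simp [MvPolynomial.smul_eval] }
  let W : Submodule ℝ C(↥(refS d), ℝ) := LinearMap.range Λ
  haveI : FiniteDimensional ℝ W := inferInstance
  have h0S : (0 : Euc d) ∈ refS d := by
    apply subset_convexHull
    exact ⟨0, by simp [corner]⟩
  have hone : (1 : MvPolynomial (Fin d) ℝ) ∈ MvPolynomial.restrictTotalDegree (Fin d) ℝ ℓ := by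
    rw [MvPolynomial.mem_restrictTotalDegree]
    simp
  have hWne : (Metric.sphere (0 : W) 1).Nonempty := by
    set f₁ : C(↥(refS d), ℝ) := Λ ⟨1, hone⟩ with hf₁
    have hf₁ne : f₁ ≠ 0 := by
      intro h
      have h1 : f₁ ⟨0, h0S⟩ = 0 := by rw [h]; rfl
      rw [hf₁] at h1
      simp [Λ] at h1
    have hf₁W : f₁ ∈ W := ⟨⟨1, hone⟩, rfl⟩
    have hx0 : (⟨f₁, hf₁W⟩ : W) ≠ 0 := by
      intro h
      exact hf₁ne (by simpa [Subtype.ext_iff] using h)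
    refine ⟨(‖(⟨f₁, hf₁W⟩ : W)‖)⁻¹ • (⟨f₁, hf₁W⟩ : W), ?_⟩
    rw [mem_sphere_zero_iff_norm]
    exact norm_smul_inv_norm (𝕜 := ℝ) hx0
  have hsph : IsCompact (Metric.sphere (0 : W) 1) := isCompact_sphere _ _
  have hJW : Continuous fun w : W => J (w : C(↥(refS d), ℝ)) :=
    hJcont.comp continuous_subtype_val
  obtain ⟨w₀, hw₀mem, hminOn⟩ := hsph.exists_isMinOn hWne hJW.continuousOn
  have hmin : ∀ u ∈ Metric.sphere (0 : W) 1, J ↑w₀ ≤ J ↑u :=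
    fun u hu => hminOn hu
  have hw₀norm : ‖(w₀ : C(↥(refS d), ℝ))‖ = 1 := by
    have h := mem_sphere_zero_iff_norm.mp hw₀mem
    exact h
  have hw₀pos : 0 < J ↑w₀ := by
    apply hJpos
    intro h
    rw [h] at hw₀norm
    simp at hw₀norm
  refine ⟨(J ↑w₀)⁻¹, inv_nonneg.mpr hw₀pos.le, ?_⟩
  intro p hp y hy
  have hpV : p ∈ MvPolynomial.restrictTotalDegree (Fin d) ℝ ℓ := by
    rw [MvPolynomial.mem_restrictTotalDegree]
    exact hp
  set f : C(↥(refS d), ℝ) := Λ ⟨p, hpV⟩ with hfdef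
  have hfW : f ∈ W := ⟨⟨p, hpV⟩, rfl⟩
  have key : J ↑w₀ * ‖f‖ ^ 2 ≤ J f := by
    rcases eq_or_ne f 0 with h0 | h0
    · simp [h0, hJdef]
    · have hn : 0 < ‖f‖ := norm_pos_iff.mpr h0
      set u : W := (‖(⟨f, hfW⟩ : W)‖)⁻¹ • (⟨f, hfW⟩ : W) with hu
      have huS : u ∈ Metric.sphere (0 : W) 1 := by
        rw [mem_sphere_zero_iff_norm]
        refine norm_smul_inv_norm (𝕜 := ℝ) (x := (⟨f, hfW⟩ : W)) ?_
        intro h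
        exact h0 (by simpa [Subtype.ext_iff] using h)
      have hmin' := hmin u huS
      have hscale : J ↑u = (‖f‖⁻¹) ^ 2 * J f := by
        simp only [hJdef]
        have hcoe : ∀ y : ↥(refS d), ((u : C(↥(refS d), ℝ)) y) ^ 2
            = ‖f‖⁻¹ ^ 2 * (f y) ^ 2 := by
          intro y
          have hyy : ((u : C(↥(refS d), ℝ)) y) = ‖f‖⁻¹ * (f y) := rfl
          rw [hyy, mul_pow]
        simp only [hcoe]
        exact MeasureTheory.integral_const_mul _ _
      rw [hscale] at hmin'
      have h2 : J ↑w₀ * ‖f‖ ^ 2 ≤ (‖f‖⁻¹ ^ 2 * J f) * ‖f‖ ^ 2 :=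
        mul_le_mul_of_nonneg_right hmin' (sq_nonneg _)
      calc J ↑w₀ * ‖f‖ ^ 2 ≤ (‖f‖⁻¹ ^ 2 * J f) * ‖f‖ ^ 2 := h2
        _ = J f := by field_simp
  have heval : (eval (fun j => y j) p) ^ 2 ≤ ‖f‖ ^ 2 := by
    have h1 : |f ⟨y, hy⟩| ≤ ‖f‖ := by
      simpa [Real.norm_eq_abs] using f.norm_coe_le_norm ⟨y, hy⟩
    have h2 : f ⟨y, hy⟩ = eval (fun j => y j) p := rfl
    calc (eval (fun j => y j) p) ^ 2 = |f ⟨y, hy⟩| ^ 2 := by rw [h2, sq_abs]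
      _ ≤ ‖f‖ ^ 2 := pow_le_pow_left₀ (abs_nonneg _) h1 2
  have hJf : J f = ∫ x in refS d, (eval (fun j => x j) p) ^ 2 := by
    simp only [hJdef, hμdef]
    exact integral_subtype_comap hSm (fun x => (eval (fun j => x j) p) ^ 2)
  have hfin : ‖f‖ ^ 2 ≤ (J ↑w₀)⁻¹ * ∫ x in refS d, (eval (fun j => x j) p) ^ 2 := by
    rw [← hJf, inv_mul_eq_div, le_div_iff₀ hw₀pos, mul_comm]
    exact key
  exact heval.trans hfin

end InvTraceAux

namespace InvTraceAux

open MvPolynomial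

variable {d : ℕ}

lemma euc_sum_apply {n : ℕ} {ι : Type*} (s : Finset ι) (f : ι → Euc n) (j : Fin n) :
    (∑ k ∈ s, f k) j = ∑ k ∈ s, f k j := by
  classical
  induction s using Finset.induction_on with
  | empty => rfl
  | insert _ _ h ih =>
      rw [Finset.sum_insert h, Finset.sum_insert h, ← ih]
      rfl

lemma aeval_eq_evalR (v : Fin d → ℝ) (g : MvPolynomial (Fin d) ℝ) :
    aeval v g = eval v g := by
  rw [← MvPolynomial.coe_aeval_eq_eval]
  rfl

lemma eval_aeval' (v : Fin d → ℝ) (s : Fin d → MvPolynomial (Fin d) ℝ)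
    (p : MvPolynomial (Fin d) ℝ) :
    eval v (aeval s p) = eval (fun j => eval v (s j)) p := by
  have h := MvPolynomial.comp_aeval (f := s)
    (φ := (aeval v : MvPolynomial (Fin d) ℝ →ₐ[ℝ] ℝ))
  have h2 := DFunLike.congr_fun h p
  simp only [AlgHom.coe_comp, Function.comp_apply] at h2
  simpa [aeval_eq_evalR] using h2

lemma totalDegree_aeval_le (s : Fin d → MvPolynomial (Fin d) ℝ)
    (hs : ∀ j, (s j).totalDegree ≤ 1) (p : MvPolynomial (Fin d) ℝ) :
    (aeval s p).totalDegree ≤ p.totalDegree := by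
  classical
  conv_lhs => rw [p.as_sum]
  rw [map_sum]
  refine (MvPolynomial.totalDegree_finset_sum _ _).trans (Finset.sup_le fun m hm => ?_)
  rw [aeval_monomial]
  refine (MvPolynomial.totalDegree_mul _ _).trans ?_
  have hC : (algebraMap ℝ (MvPolynomial (Fin d) ℝ) (coeff m p)).totalDegree = 0 := by
    rw [MvPolynomial.algebraMap_eq]
    exact totalDegree_C _
  rw [hC, zero_add]
  have hprod : (m.prod fun j k => s j ^ k).totalDegree ≤ ∑ j ∈ m.support, m j * 1 := by
    rw [Finsupp.prod]
    refine (MvPolynomial.totalDegree_finset_prod _ _).trans ?_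
    refine Finset.sum_le_sum fun j _ => ?_
    exact (MvPolynomial.totalDegree_pow _ _).trans (Nat.mul_le_mul_left _ (hs j))
  refine hprod.trans ?_
  simp only [mul_one]
  exact MvPolynomial.le_totalDegree hm

/-- The constant in the reference bound. -/
def refC (ℓ d : ℕ) : ℝ := Classical.choose (ref_bound d ℓ)

lemma refC_nonneg (ℓ d : ℕ) : 0 ≤ refC ℓ d := (Classical.choose_spec (ref_bound d ℓ)).1

lemma refC_bound (ℓ d : ℕ) (p : MvPolynomial (Fin d) ℝ) (hp : p.totalDegree ≤ ℓ)
    (y : Euc d) (hy : y ∈ refS d) :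
    (eval (fun j => y j) p) ^ 2 ≤ refC ℓ d * ∫ x in refS d, (eval (fun j => x j) p) ^ 2 :=
  (Classical.choose_spec (ref_bound d ℓ)).2 p hp y hy

/-- The trace constant. -/
def mconst (ℓ d : ℕ) : ℝ := Real.sqrt (refC ℓ d * (volume (refS d)).toReal)

end InvTraceAux


set_option maxHeartbeats 1600000

/-- **Inverse trace inequality for polynomials on simplices**.  For every dimension
`d ≥ 1` and polynomial degree `ℓ` there is a constant `m̃₀`, depending only on `ℓ` and
`d`, such that for every nondegenerate `d`-simplex `K ⊂ ℝ^d`, every `(d-1)`-face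
`F = K.face i` of `K` and every polynomial `p` of total degree `≤ ℓ`,
`(|K|/|F|)^{1/2} ‖p‖_{L²(F)} ≤ m̃₀ ‖p‖_{L²(K)}`. -/
theorem inverse_trace_inequality_polynomials :
    ∃ m : ℕ → ℕ → ℝ,
      ∀ (d ℓ : ℕ), 1 ≤ d →
      ∀ (K : Simp d) (i : Fin (d + 1)) (p : MvPolynomial (Fin d) ℝ),
        p.totalDegree ≤ ℓ →
        Real.sqrt (K.vol / (μH[(d : ℝ) - 1] (K.face i)).toReal) *
            Real.sqrt (sqL2S (K.face i) (fun x => MvPolynomial.eval (fun j => x j) p))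
          ≤ m ℓ d *
            Real.sqrt (sqL2 K.toSet (fun x => MvPolynomial.eval (fun j => x j) p)) := by
    classical
  refine ⟨InvTraceAux.mconst, ?_⟩
  intro d ℓ _hd K i p hp
  set pf : Euc d → ℝ := fun x => MvPolynomial.eval (fun j => x j) p with hpf
  set μF : ℝ := (μH[(d : ℝ) - 1] (K.face i)).toReal with hμF
  have hmnn : 0 ≤ InvTraceAux.mconst ℓ d := Real.sqrt_nonneg _
  by_cases hμ0 : μF = 0
  · rw [hμ0, div_zero, Real.sqrt_zero, zero_mul]
    exact mul_nonneg hmnn (Real.sqrt_nonneg _)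
  have hμpos : 0 < μF := lt_of_le_of_ne ENNReal.toReal_nonneg (Ne.symm hμ0)
  have hμfin : μH[(d : ℝ) - 1] (K.face i) ≠ ⊤ := by
    intro h
    rw [hμF, h] at hμ0
    simp at hμ0
  -- the affine map sending the reference simplex onto K
  set w : Fin d → Euc d := fun k => K.vert (i.succAbove k) - K.vert i with hw
  set bb := (EuclideanSpace.basisFun (Fin d) ℝ).toBasis with hbb
  set L : Euc d →ₗ[ℝ] Euc d := bb.constr ℝ w with hL
  have hLb : ∀ k : Fin d, L (EuclideanSpace.single k 1) = w k := by
    intro k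
    have h1 : bb k = EuclideanSpace.single k 1 := by
      rw [hbb, OrthonormalBasis.coe_toBasis, EuclideanSpace.basisFun_apply]
    rw [← h1, hL]
    exact bb.constr_basis ℝ w k
  have hLap : ∀ x : Euc d, L x = ∑ k, x k • w k := by
    intro x
    conv_lhs => rw [← InvTraceAux.sum_smul_single x]
    rw [map_sum]
    refine Finset.sum_congr rfl fun k _ => ?_
    rw [LinearMap.map_smul, hLb]
  have hli : LinearIndependent ℝ w := by
    have h0 := (affineIndependent_iff_linearIndependent_vsub ℝ K.vert i).mp K.indep
    have hinj : Function.Injective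
        (fun k : Fin d => (⟨i.succAbove k, Fin.succAbove_ne i k⟩ : {x : Fin (d+1) // x ≠ i})) := by
      intro a b hab
      exact Fin.succAbove_right_injective (congrArg Subtype.val hab)
    have h1 := h0.comp _ hinj
    have h2 : (fun k : Fin d => K.vert (i.succAbove k) -ᵥ K.vert i) = w := by
      funext k
      simp [hw, vsub_eq_sub]
    rw [← h2]
    exact h1
  have hLinj : Function.Injective L := by
    intro x y hxy
    have hz : L (x - y) = 0 := by rw [map_sub, hxy, sub_self]
    rw [hLap] at hz
    have hcoef := (Fintype.linearIndependent_iff.mp hli) (fun k => (x - y) k) hz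
    have hxy0 : x - y = 0 := by
      ext k
      exact hcoef k
    have := sub_eq_zero.mp hxy0
    exact this
  set T : Euc d → Euc d := fun x => K.vert i + L x with hT
  -- K is the image of the reference simplex
  set e : Fin (d + 1) → Fin (d + 1) :=
    fun j => if h : j = 0 then i else i.succAbove (j.pred h) with he
  have hTc : ∀ j, T (InvTraceAux.corner d j) = K.vert (e j) := by
    intro j
    by_cases h : j = 0
    · simp [hT, he, h, InvTraceAux.corner]
    · simp only [hT, he, InvTraceAux.corner, dif_neg h]
      rw [hLb]
      simp [hw]
  have hesurj : Function.Surjective e := by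
    intro t
    by_cases ht : t = i
    · exact ⟨0, by simp [he, ht]⟩
    · obtain ⟨k, hk⟩ := Fin.exists_succAbove_eq ht
      refine ⟨k.succ, ?_⟩
      simp only [he, dif_neg (Fin.succ_ne_zero k)]
      rw [Fin.pred_succ]
      exact hk
  have hKT : K.toSet = T '' (InvTraceAux.refS d) := by
    set Ta : Euc d →ᵃ[ℝ] Euc d :=
      ((AffineEquiv.constVAdd ℝ (Euc d) (K.vert i)).toAffineMap).comp L.toAffineMap with hTa
    have hTaeq : ⇑Ta = T := by
      funext x
      simp [hTa, hT]
    have himg : T '' (convexHull ℝ (Set.range (InvTraceAux.corner d)))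
        = convexHull ℝ (T '' Set.range (InvTraceAux.corner d)) := by
      rw [← hTaeq]
      exact Ta.image_convexHull _
    rw [Simp.toSet, ← hesurj.range_comp K.vert]
    rw [show K.vert ∘ e = T ∘ InvTraceAux.corner d from funext fun j => (hTc j).symm]
    rw [Set.range_comp, InvTraceAux.refS, himg]
  -- change of variables
  set Lc : Euc d →L[ℝ] Euc d := LinearMap.toContinuousLinearMap L with hLc
  have hderiv : ∀ x ∈ InvTraceAux.refS d,
      HasFDerivWithinAt T Lc (InvTraceAux.refS d) x := by
    intro x _
    exact ((Lc.hasFDerivAt).const_add (K.vert i)).hasFDerivWithinAt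
  have hTinjOn : Set.InjOn T (InvTraceAux.refS d) := by
    intro a _ b _ hab
    apply hLinj
    exact add_left_cancel hab
  have hchange := MeasureTheory.integral_image_eq_integral_abs_det_fderiv_smul volume
      InvTraceAux.measurableSet_refS hderiv hTinjOn (fun x => (pf x) ^ 2)
  have hdet : Lc.det = LinearMap.det L := by
    rw [hLc, ContinuousLinearMap.det, LinearMap.coe_toContinuousLinearMap]
  -- the pulled-back polynomial
  set sub : Fin d → MvPolynomial (Fin d) ℝ :=
    fun j => MvPolynomial.C (K.vert i j) + ∑ k, MvPolynomial.C (w k j) * MvPolynomial.X k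
    with hsub
  have hsubdeg : ∀ j, (sub j).totalDegree ≤ 1 := by
    intro j
    rw [hsub]
    refine (MvPolynomial.totalDegree_add _ _).trans (max_le ?_ ?_)
    · simp [MvPolynomial.totalDegree_C]
    · refine (MvPolynomial.totalDegree_finset_sum _ _).trans ?_
      refine Finset.sup_le fun k _ => ?_
      refine (MvPolynomial.totalDegree_mul _ _).trans ?_
      simp [MvPolynomial.totalDegree_C, MvPolynomial.totalDegree_X]
  set q : MvPolynomial (Fin d) ℝ := MvPolynomial.aeval sub p with hq
  have hqdeg : q.totalDegree ≤ ℓ :=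
    (InvTraceAux.totalDegree_aeval_le sub hsubdeg p).trans hp
  have hqev : ∀ x : Euc d, MvPolynomial.eval (fun j => x j) q = pf (T x) := by
    intro x
    rw [hq, InvTraceAux.eval_aeval']
    have harg : (fun j => MvPolynomial.eval (fun j' => x j') (sub j)) = fun j => T x j := by
      funext j
      rw [hsub]
      simp only [map_add, MvPolynomial.eval_C, map_sum, map_mul, MvPolynomial.eval_X]
      have hLxj : (L x) j = ∑ k, (w k j) * x k := by
        rw [hLap, InvTraceAux.euc_sum_apply]
        exact Finset.sum_congr rfl fun k _ => mul_comm _ _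
      have hTxj : T x j = K.vert i j + (L x) j := rfl
      rw [hTxj, hLxj]
    rw [harg]
  -- integrals
  set Iq : ℝ := ∫ x in InvTraceAux.refS d, (MvPolynomial.eval (fun j => x j) q) ^ 2 with hIq
  have hIqnn : 0 ≤ Iq := by
    rw [hIq]
    exact MeasureTheory.integral_nonneg fun x => sq_nonneg _
  have hSk : sqL2 K.toSet pf = |LinearMap.det L| * Iq := by
    have h1 : sqL2 K.toSet pf = ∫ x in T '' InvTraceAux.refS d, (pf x) ^ 2 := by
      rw [sqL2, hKT]
    rw [h1, hchange]
    have h2 : ∀ x : Euc d, |(Lc.det)| • (pf (T x)) ^ 2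
        = |LinearMap.det L| * (MvPolynomial.eval (fun j => x j) q) ^ 2 := by
      intro x
      rw [smul_eq_mul, hqev x, hdet]
    simp only [h2]
    rw [MeasureTheory.integral_const_mul]
  have hvolK : volume K.toSet
      = ENNReal.ofReal |LinearMap.det L| * volume (InvTraceAux.refS d) := by
    rw [hKT]
    have himg2 : T '' InvTraceAux.refS d
        = (fun x => K.vert i + x) '' (L '' InvTraceAux.refS d) := by
      rw [← Set.image_comp]
      rfl
    rw [himg2, Set.image_add_left, measure_preimage_add,
      MeasureTheory.Measure.addHaar_image_linearMap]
  have hKvol : K.vol = |LinearMap.det L| * (volume (InvTraceAux.refS d)).toReal := by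
    rw [Simp.vol, hvolK, ENNReal.toReal_mul, ENNReal.toReal_ofReal (abs_nonneg _)]
  have hKvnn : 0 ≤ K.vol := by
    rw [Simp.vol]
    exact ENNReal.toReal_nonneg
  -- pointwise bound on K
  have hpt : ∀ xx, xx ∈ K.toSet → (pf xx) ^ 2 ≤ InvTraceAux.refC ℓ d * Iq := by
    intro xx hxx
    rw [hKT] at hxx
    obtain ⟨y, hy, rfl⟩ := hxx
    have h := InvTraceAux.refC_bound ℓ d q hqdeg y hy
    rw [hqev y] at h
    rw [← hIq] at h
    exact h
  have hFsub : K.face i ⊆ K.toSet := by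
    rw [Simp.face, Simp.toSet]
    exact convexHull_mono (Set.image_subset_range _ _)
  -- surface integral bound
  have hSfle : sqL2S (K.face i) pf ≤ (InvTraceAux.refC ℓ d * Iq) * μF := by
    have hC : ∀ x ∈ K.face i, ‖(pf x) ^ 2‖ ≤ InvTraceAux.refC ℓ d * Iq := by
      intro x hx
      rw [Real.norm_eq_abs, abs_of_nonneg (sq_nonneg _)]
      exact hpt x (hFsub hx)
    have hmeas : MeasureTheory.AEStronglyMeasurable (fun x => (pf x) ^ 2)
        ((μH[(d : ℝ) - 1]).restrict (K.face i)) := by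
      exact ((InvTraceAux.continuous_evalp p).pow 2).aestronglyMeasurable
    have hb := MeasureTheory.norm_setIntegral_le_of_norm_le_const
      (μ := μH[(d : ℝ) - 1]) (s := K.face i) (f := fun x => (pf x) ^ 2)
      (lt_top_iff_ne_top.mpr hμfin) hC
    calc sqL2S (K.face i) pf ≤ ‖∫ x in K.face i, (pf x) ^ 2 ∂μH[(d : ℝ) - 1]‖ := by
          rw [sqL2S]
          exact le_abs_self _
      _ ≤ (InvTraceAux.refC ℓ d * Iq) * μF := hb
  -- assemble
  have hfinal : K.vol / μF * sqL2S (K.face i) pf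
      ≤ InvTraceAux.refC ℓ d * (volume (InvTraceAux.refS d)).toReal * sqL2 K.toSet pf := by
    calc K.vol / μF * sqL2S (K.face i) pf
        ≤ K.vol / μF * ((InvTraceAux.refC ℓ d * Iq) * μF) :=
          mul_le_mul_of_nonneg_left hSfle (div_nonneg hKvnn ENNReal.toReal_nonneg)
      _ = K.vol * (InvTraceAux.refC ℓ d * Iq) := by
          rw [mul_comm (InvTraceAux.refC ℓ d * Iq) μF, ← mul_assoc,
            div_mul_cancel₀ _ (ne_of_gt hμpos)]
      _ = (|LinearMap.det L| * (volume (InvTraceAux.refS d)).toReal)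
            * (InvTraceAux.refC ℓ d * Iq) := by rw [hKvol]
      _ = InvTraceAux.refC ℓ d * (volume (InvTraceAux.refS d)).toReal
            * (|LinearMap.det L| * Iq) := by ring
      _ = InvTraceAux.refC ℓ d * (volume (InvTraceAux.refS d)).toReal * sqL2 K.toSet pf := by
          rw [hSk]
  have hLHS : Real.sqrt (K.vol / μF) * Real.sqrt (sqL2S (K.face i) pf)
      = Real.sqrt (K.vol / μF * sqL2S (K.face i) pf) :=
    (Real.sqrt_mul (div_nonneg hKvnn ENNReal.toReal_nonneg) _).symm
  rw [hLHS]
  calc Real.sqrt (K.vol / μF * sqL2S (K.face i) pf)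
      ≤ Real.sqrt (InvTraceAux.refC ℓ d * (volume (InvTraceAux.refS d)).toReal
          * sqL2 K.toSet pf) := Real.sqrt_le_sqrt hfinal
    _ = InvTraceAux.mconst ℓ d * Real.sqrt (sqL2 K.toSet pf) := by
        rw [Real.sqrt_mul (mul_nonneg (InvTraceAux.refC_nonneg ℓ d) ENNReal.toReal_nonneg) _]
        rfl
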